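/- arXiv:2003.08347 — 6 statements merged into one kernel-verified Lean document; each statement's English description precedes it below -/
import Mathlib

section
/- Let (π, H) be a square-integrable σ-representation of a countable discrete group Γ on a separable complex Hilbert space H, and let g ∈ H be arbitrary. Then the coefficient operator C_{g,Γ}, defined on the domain dom(C_{g,Γ}) = {f ∈ H : (⟨f, π(γ)g⟩)_{γ∈Γ} ∈ ℓ²(Γ)} by C_{g,Γ}f = (⟨f, π(γ)g⟩)_{γ∈Γ}, is densely defined (dom(C_{g,Γ}) is dense in H) and closed (its graph {(f, C_{g,Γ}f) : f ∈ dom(C_{g,Γ})} is closed in H × ℓ²(Γ)). -/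
open MeasureTheory
open scoped ENNReal ComplexInnerProductSpace

noncomputable section

section Defs

variable {Γ : Type*} [Group Γ] {H : Type*} [NormedAddCommGroup H] [InnerProductSpace ℂ H]

/-- A projective unitary `σ`-representation: `|σ| = 1`, cocycle identity, normalization,
`π 1 = I`, and `π x π y = σ(x,y) π(xy)`. -/
def IsProjectiveRep (σ : Γ → Γ → ℂ) (π : Γ → H ≃ₗᵢ[ℂ] H) : Prop :=
  (∀ x y : Γ, ‖σ x y‖ = 1) ∧
  (∀ x y z : Γ, σ x (y * z) * σ y z = σ (x * y) z * σ x y) ∧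
  (∀ x : Γ, σ x 1 = 1 ∧ σ 1 x = 1) ∧
  π 1 = LinearIsometryEquiv.refl ℂ H ∧
  ∀ x y : Γ, ∀ f : H, π x (π y f) = σ x y • π (x * y) f

/-- `g` is a Bessel vector for the family `(π γ g)_γ`. -/
def IsBesselVector (π : Γ → H ≃ₗᵢ[ℂ] H) (g : H) : Prop :=
  ∃ B : ℝ, 0 < B ∧ ∀ f : H,
    (Summable fun γ : Γ => ‖⟪f, π γ g⟫‖ ^ 2) ∧
      (∑' γ : Γ, ‖⟪f, π γ g⟫‖ ^ 2) ≤ B * ‖f‖ ^ 2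

/-- Square-integrability: square-summable matrix coefficients on a dense subspace. -/
def IsSquareIntegrableRep (π : Γ → H ≃ₗᵢ[ℂ] H) : Prop :=
  ∃ D : Submodule ℂ H, Dense (D : Set H) ∧
    ∀ f : H, ∀ g ∈ D, Summable fun γ : Γ => ‖⟪f, π γ g⟫‖ ^ 2

/-- The commutant `π(Γ)'`. -/
def RepCommutant (π : Γ → H ≃ₗᵢ[ℂ] H) : Set (H →L[ℂ] H) :=
  {T | ∀ (γ : Γ) (f : H), T (π γ f) = π γ (T f)}

/-- The double commutant `π(Γ)''`. -/
def RepBicommutant (π : Γ → H ≃ₗᵢ[ℂ] H) : Set (H →L[ℂ] H) :=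
  {T | ∀ S ∈ RepCommutant π, ∀ f : H, T (S f) = S (T f)}

/-- `h` is separating for `π(Γ)''`. -/
def IsSeparatingVector (π : Γ → H ≃ₗᵢ[ℂ] H) (h : H) : Prop :=
  ∀ T ∈ RepBicommutant π, T h = 0 → T = 0

/-- `(π γ g)_γ` is a Parseval frame for `H`. -/
def IsParsevalFrame (π : Γ → H ≃ₗᵢ[ℂ] H) (g : H) : Prop :=
  ∀ f : H, HasSum (fun γ : Γ => ‖⟪f, π γ g⟫‖ ^ 2) (‖f‖ ^ 2)

/-- `(π γ g)_γ` is a frame for `H`. -/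
def IsFrame (π : Γ → H ≃ₗᵢ[ℂ] H) (g : H) : Prop :=
  ∃ A B : ℝ, 0 < A ∧ 0 < B ∧ ∀ f : H,
    (Summable fun γ : Γ => ‖⟪f, π γ g⟫‖ ^ 2) ∧
      A * ‖f‖ ^ 2 ≤ (∑' γ : Γ, ‖⟪f, π γ g⟫‖ ^ 2) ∧
      (∑' γ : Γ, ‖⟪f, π γ g⟫‖ ^ 2) ≤ B * ‖f‖ ^ 2

/-- `(π γ g)_γ` is a Riesz sequence. -/
def IsRieszSequence (π : Γ → H ≃ₗᵢ[ℂ] H) (g : H) : Prop :=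
  ∃ A B : ℝ, 0 < A ∧ 0 < B ∧ ∀ (s : Finset Γ) (c : Γ → ℂ),
    A * ∑ γ ∈ s, ‖c γ‖ ^ 2 ≤ ‖∑ γ ∈ s, c γ • π γ g‖ ^ 2 ∧
      ‖∑ γ ∈ s, c γ • π γ g‖ ^ 2 ≤ B * ∑ γ ∈ s, ‖c γ‖ ^ 2

/-- `g` is cyclic: the orbit `π(Γ)g` has dense linear span. -/
def IsCyclicVector (π : Γ → H ≃ₗᵢ[ℂ] H) (g : H) : Prop :=
  Dense ((Submodule.span ℂ (Set.range fun γ : Γ => π γ g) : Submodule ℂ H) : Set H)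

/-- `γ₀` is `σ`-regular. -/
def IsSigmaRegular (σ : Γ → Γ → ℂ) (γ₀ : Γ) : Prop :=
  ∀ γ : Γ, γ * γ₀ = γ₀ * γ → σ γ₀ γ = σ γ γ₀

/-- Kleppner's condition for `(Γ, σ)`. -/
def KleppnerCondition (σ : Γ → Γ → ℂ) : Prop :=
  ∀ γ₀ : Γ, γ₀ ≠ 1 → IsSigmaRegular σ γ₀ →
    {x : Γ | ∃ γ : Γ, γ * γ₀ * γ⁻¹ = x}.Infinite

end Defs

/-! Since `π γ⁻¹ (π γ g) = σ(γ⁻¹, γ) g` with `|σ| = 1`, the coefficients satisfy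
`|⟪f, π γ g⟫| = |⟪g, π γ⁻¹ f⟫|`. Hence every `f` in the dense subspace `D` of the definition of
square-integrability lies in the domain of `C_{g,Γ}`, whatever `g` is. The graph is closed because
it is cut out by the equations `c γ = ⟪f, π γ g⟫`, both sides of which are continuous in `(f, c)`. -/

theorem lp.isClosed_setOf_forall_apply_eq {α X : Type*} {E : α → Type*}
    [∀ i, NormedAddCommGroup (E i)] {p : ℝ≥0∞} [Fact (1 ≤ p)] [TopologicalSpace X]
    {φ : ∀ i, X → E i} (hφ : ∀ i, Continuous (φ i)) :
    IsClosed {q : X × lp E p | ∀ i, q.2 i = φ i q.1} := by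
  simp only [Set.ofPred_forall]
  exact isClosed_iInter fun i => isClosed_eq
    ((continuous_apply i).comp (lp.uniformContinuous_coe.continuous.comp continuous_snd))
    ((hφ i).comp continuous_fst)

theorem memℓp_two_of_summable_sq_norm {α : Type*} {E : α → Type*} [∀ i, NormedAddCommGroup (E i)]
    {f : ∀ i, E i} (hf : Summable fun i => ‖f i‖ ^ 2) : Memℓp f 2 :=
  memℓp_gen (by simpa using hf)

namespace IsProjectiveRep

variable {Γ : Type*} [Group Γ] {H : Type*} [NormedAddCommGroup H] [InnerProductSpace ℂ H]
  {σ : Γ → Γ → ℂ} {π : Γ → H ≃ₗᵢ[ℂ] H}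

theorem apply_inv_apply (hrep : IsProjectiveRep σ π) (γ : Γ) (g : H) :
    π γ⁻¹ (π γ g) = σ γ⁻¹ γ • g := by
  rw [hrep.2.2.2.2, inv_mul_cancel, hrep.2.2.2.1, LinearIsometryEquiv.coe_refl, id]

theorem inner_apply (hrep : IsProjectiveRep σ π) (γ : Γ) (f g : H) :
    ⟪f, π γ g⟫ = σ γ⁻¹ γ * ⟪π γ⁻¹ f, g⟫ := by
  rw [← (π γ⁻¹).inner_map_map, hrep.apply_inv_apply, inner_smul_right]

theorem norm_inner_apply_eq (hrep : IsProjectiveRep σ π) (γ : Γ) (f g : H) :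
    ‖⟪f, π γ g⟫‖ = ‖⟪g, π γ⁻¹ f⟫‖ := by
  rw [hrep.inner_apply, norm_mul, hrep.1, one_mul, norm_inner_symm]

theorem summable_sq_norm_inner_swap (hrep : IsProjectiveRep σ π) {f g : H}
    (h : Summable fun γ => ‖⟪g, π γ f⟫‖ ^ 2) : Summable fun γ => ‖⟪f, π γ g⟫‖ ^ 2 := by
  simp only [hrep.norm_inner_apply_eq _ f g]
  exact (Equiv.inv Γ).summable_iff.mpr h

theorem dense_setOf_memℓp_inner (hrep : IsProjectiveRep σ π) (hsq : IsSquareIntegrableRep π)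
    (g : H) : Dense {f : H | Memℓp (fun γ : Γ => ⟪f, π γ g⟫) 2} := by
  obtain ⟨D, hD, hDsq⟩ := hsq
  exact hD.mono fun f hf =>
    memℓp_two_of_summable_sq_norm (hrep.summable_sq_norm_inner_swap (hDsq g f hf))

end IsProjectiveRep

theorem stmt_2_general
    {Γ : Type*} [Group Γ]
    {H : Type*} [NormedAddCommGroup H] [InnerProductSpace ℂ H]
    (σ : Γ → Γ → ℂ) (π : Γ → H ≃ₗᵢ[ℂ] H)
    (hrep : IsProjectiveRep σ π)
    (hsq : IsSquareIntegrableRep π)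
    (g : H) :
    Dense {f : H | Memℓp (fun γ : Γ => ⟪f, π γ g⟫) 2} ∧
    IsClosed {p : H × lp (fun _ : Γ => ℂ) 2 | ∀ γ : Γ, p.2 γ = ⟪p.1, π γ g⟫} :=
  ⟨hrep.dense_setOf_memℓp_inner hsq g,
    lp.isClosed_setOf_forall_apply_eq (φ := fun γ f => ⟪f, π γ g⟫)
      fun _ => continuous_id.inner continuous_const⟩

theorem stmt_2
    {Γ : Type*} [Group Γ] [Countable Γ]
    {H : Type*} [NormedAddCommGroup H] [InnerProductSpace ℂ H] [CompleteSpace H]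
    [TopologicalSpace.SeparableSpace H]
    (σ : Γ → Γ → ℂ) (π : Γ → H ≃ₗᵢ[ℂ] H)
    (hrep : IsProjectiveRep σ π)
    (hsq : IsSquareIntegrableRep π)
    (g : H) :
    Dense {f : H | Memℓp (fun γ : Γ => ⟪f, π γ g⟫) 2} ∧
    IsClosed {p : H × lp (fun _ : Γ => ℂ) 2 | ∀ γ : Γ, p.2 γ = ⟪p.1, π γ g⟫} :=
  stmt_2_general σ π hrep hsq g
end
end

section
/- Let (π, H) be a square-integrable σ-representation of a countable discrete group Γ on a separable complex Hilbert space H, and let g ∈ H be arbitrary. Define the reconstruction operator D_{g,Γ} on the domain dom(D_{g,Γ}) = {c ∈ ℓ²(Γ) : there exists f ∈ H with Σ_{γ∈Γ} c_γ⟨π(γ)g, h⟩ = ⟨f, h⟩ for all Bessel vectors h} by D_{g,Γ}c = f (this f is unique since the Bessel vectors are dense). Then D_{g,Γ} is densely defined (its domain contains all finitely supported sequences, hence is dense in ℓ²(Γ)) and closed (its graph is closed in ℓ²(Γ) × H). -/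
open MeasureTheory
open scoped ENNReal ComplexInnerProductSpace

noncomputable section

/-! For finitely supported `c` the element `∑ conj (c γ) • π γ g` reconstructs `c`, and finitely
supported sequences are dense in `ℓ²`. For a Bessel vector `h`, unimodularity of `σ` gives
`|⟪π γ g, h⟫| = |⟪g, π γ⁻¹ h⟫|`, so `a := (⟪π γ g, h⟫)_γ` is square-summable and
`c ↦ ∑ c γ * a γ` is the continuous functional `⟪conj a, c⟫` on `ℓ²`. The graph is thus the
intersection, over Bessel vectors `h`, of the closed sets where this functional agrees with
`f ↦ ⟪f, h⟫`. -/

open scoped InnerProductSpace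

section SquareSummable

variable {ι : Type*} {𝕜 : Type*} [RCLike 𝕜]

theorem memℓp_two_of_summable_sq {a : ι → 𝕜} (ha : Summable fun i => ‖a i‖ ^ 2) :
    Memℓp a 2 :=
  memℓp_gen <| by simpa only [ENNReal.toReal_ofNat, ← Real.rpow_ofNat] using ha

theorem hasSum_mul_inner_star_lp {a : ι → 𝕜} (ha : Summable fun i => ‖a i‖ ^ 2)
    (c : lp (fun _ : ι => 𝕜) 2) :
    HasSum (fun i => c i * a i) ⟪star (⟨a, memℓp_two_of_summable_sq ha⟩ : lp _ 2), c⟫_𝕜 :=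
  (lp.hasSum_inner _ c).congr_fun fun i => by
    simp [lp.star_apply, RCLike.inner_apply]

theorem isClosed_setOf_hasSum_mul {X : Type*} [TopologicalSpace X] {a : ι → 𝕜}
    (ha : Summable fun i => ‖a i‖ ^ 2) {c : X → lp (fun _ : ι => 𝕜) 2} {y : X → 𝕜}
    (hc : Continuous c) (hy : Continuous y) :
    IsClosed {x | HasSum (fun i => c x i * a i) (y x)} := by
  set v : lp (fun _ : ι => 𝕜) 2 := star ⟨a, memℓp_two_of_summable_sq ha⟩
  have hset : {x | HasSum (fun i => c x i * a i) (y x)} = {x | ⟪v, c x⟫_𝕜 = y x} := by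
    ext x
    refine ⟨(hasSum_mul_inner_star_lp ha (c x)).unique, fun (h : ⟪v, c x⟫_𝕜 = y x) => ?_⟩
    exact (h ▸ hasSum_mul_inner_star_lp ha (c x) :)
  rw [hset]
  exact isClosed_eq (continuous_const.inner hc) hy

end SquareSummable

theorem lp.dense_setOf_finite_support {ι : Type*} {E : ι → Type*}
    [∀ i, NormedAddCommGroup (E i)] {p : ℝ≥0∞} [Fact (1 ≤ p)] (hp : p ≠ ⊤) :
    Dense {c : lp E p | {i | c i ≠ 0}.Finite} := by
  classical
  refine fun c => mem_closure_of_tendsto (lp.hasSum_single hp c) (.of_forall fun s => ?_)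
  refine s.finite_toSet.subset fun i hi => ?_
  by_contra his
  refine hi ?_
  rw [lp.coeFn_sum, Finset.sum_apply]
  exact Finset.sum_eq_zero fun j hj => lp.single_apply_ne p j _ fun hij => his (hij ▸ hj)

theorem exists_forall_hasSum_mul_inner {ι 𝕜 E : Type*} [RCLike 𝕜] [NormedAddCommGroup E]
    [InnerProductSpace 𝕜 E] (v : ι → E) {c : ι → 𝕜} (hc : {i | c i ≠ 0}.Finite) :
    ∃ f : E, ∀ h : E, HasSum (fun i => c i * ⟪v i, h⟫_𝕜) ⟪f, h⟫_𝕜 := by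
  refine ⟨∑ i ∈ hc.toFinset, (starRingEnd 𝕜) (c i) • v i, fun h => ?_⟩
  rw [sum_inner]
  simp only [inner_smul_left, RCLike.conj_conj]
  exact hasSum_sum_of_ne_finset_zero fun i hi => by simp_all

section ProjectiveRep

variable {Γ : Type*} [Group Γ] {H : Type*} [NormedAddCommGroup H] [InnerProductSpace ℂ H]
  {σ : Γ → Γ → ℂ} {π : Γ → H ≃ₗᵢ[ℂ] H}

theorem IsProjectiveRep.norm_inner_apply_left (hrep : IsProjectiveRep σ π) (γ : Γ) (g h : H) :
    ‖⟪π γ g, h⟫‖ = ‖⟪g, π γ⁻¹ h⟫‖ := by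
  obtain ⟨hσ, -, -, hπ1, hmul⟩ := hrep
  have hinv : π γ (π γ⁻¹ h) = σ γ γ⁻¹ • h := by simp [hmul, hπ1]
  rw [← (π γ).inner_map_map g, hinv, inner_smul_right, norm_mul, hσ, one_mul]

theorem IsBesselVector.summable_norm_inner_sq (hrep : IsProjectiveRep σ π) {h : H}
    (hh : IsBesselVector π h) (g : H) : Summable fun γ => ‖⟪π γ g, h⟫‖ ^ 2 := by
  obtain ⟨B, -, hB⟩ := hh
  refine ((Equiv.inv Γ).summable_iff.mpr (hB g).1).congr fun γ => ?_
  simp [hrep.norm_inner_apply_left]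

end ProjectiveRep

theorem stmt_3_general
    {Γ : Type*} [Group Γ]
    {H : Type*} [NormedAddCommGroup H] [InnerProductSpace ℂ H]
    (σ : Γ → Γ → ℂ) (π : Γ → H ≃ₗᵢ[ℂ] H)
    (hrep : IsProjectiveRep σ π)
    (g : H) :
    (∀ c : lp (fun _ : Γ => ℂ) 2, {γ : Γ | c γ ≠ 0}.Finite →
      ∃ f : H, ∀ h : H, IsBesselVector π h →
        HasSum (fun γ : Γ => c γ * ⟪π γ g, h⟫) ⟪f, h⟫) ∧
    Dense {c : lp (fun _ : Γ => ℂ) 2 | ∃ f : H, ∀ h : H, IsBesselVector π h →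
      HasSum (fun γ : Γ => c γ * ⟪π γ g, h⟫) ⟪f, h⟫} ∧
    IsClosed {p : lp (fun _ : Γ => ℂ) 2 × H | ∀ h : H, IsBesselVector π h →
      HasSum (fun γ : Γ => p.1 γ * ⟪π γ g, h⟫) ⟪p.2, h⟫} := by
  have finite_support_mem (c : lp (fun _ : Γ => ℂ) 2) (hc : {γ : Γ | c γ ≠ 0}.Finite) :
      ∃ f : H, ∀ h : H, IsBesselVector π h →
        HasSum (fun γ : Γ => c γ * ⟪π γ g, h⟫) ⟪f, h⟫ := by
    obtain ⟨f, hf⟩ := exists_forall_hasSum_mul_inner (fun γ => π γ g) hc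
    exact ⟨f, fun h _ => hf h⟩
  refine ⟨finite_support_mem,
    (lp.dense_setOf_finite_support (p := 2) ENNReal.ofNat_ne_top).mono finite_support_mem, ?_⟩
  simp only [Set.ofPred_forall]
  exact isClosed_iInter fun h => isClosed_iInter fun hh =>
    isClosed_setOf_hasSum_mul (hh.summable_norm_inner_sq hrep g) continuous_fst
      (continuous_snd.inner continuous_const)

theorem stmt_3
    {Γ : Type*} [Group Γ] [Countable Γ]
    {H : Type*} [NormedAddCommGroup H] [InnerProductSpace ℂ H] [CompleteSpace H]
    [TopologicalSpace.SeparableSpace H]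
    (σ : Γ → Γ → ℂ) (π : Γ → H ≃ₗᵢ[ℂ] H)
    (hrep : IsProjectiveRep σ π)
    (hsq : IsSquareIntegrableRep π)
    (g : H) :
    (∀ c : lp (fun _ : Γ => ℂ) 2, {γ : Γ | c γ ≠ 0}.Finite →
      ∃ f : H, ∀ h : H, IsBesselVector π h →
        HasSum (fun γ : Γ => c γ * ⟪π γ g, h⟫) ⟪f, h⟫) ∧
    Dense {c : lp (fun _ : Γ => ℂ) 2 | ∃ f : H, ∀ h : H, IsBesselVector π h →
      HasSum (fun γ : Γ => c γ * ⟪π γ g, h⟫) ⟪f, h⟫} ∧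
    IsClosed {p : lp (fun _ : Γ => ℂ) 2 × H | ∀ h : H, IsBesselVector π h →
      HasSum (fun γ : Γ => p.1 γ * ⟪π γ g, h⟫) ⟪p.2, h⟫} :=
  stmt_3_general σ π hrep g
end
end

section
/- Let (π, H) be a square-integrable σ-representation of a countable discrete group Γ on a separable complex Hilbert space H and let c ∈ ℓ²(Γ). For γ ∈ Γ define the sequence ϑ^σ(γ)c by (ϑ^σ(γ)c)_{γ'} = conj(σ(γ⁻¹, γ'))·σ(γ⁻¹γ'γ, γ⁻¹)·c_{γ⁻¹γ'γ}; then ϑ^σ(γ)c ∈ ℓ²(Γ), and for every γ ∈ Γ and every Bessel vector g ∈ H (noting that π(γ)*g is again a Bessel vector) one has π(γ)(π(c)(π(γ)*g)) = π(ϑ^σ(γ)c)g, i.e., the operator identity π(γ)π(c)π(γ)* = π(ϑ^σ(γ)c) holds on the Bessel vectors. -/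
open MeasureTheory
open scoped ENNReal ComplexInnerProductSpace

noncomputable section

/-!
The multiplier relation gives `π γ ∘ π γ' ∘ (π γ)⁻¹ = ω • π (γ γ' γ⁻¹)` with
`ω = σ(γ, γ') / σ(γ γ' γ⁻¹, γ)`, and the cocycle identity turns `ω` into
`conj σ(γ⁻¹, γ γ' γ⁻¹) · σ(γ', γ⁻¹)`, which is exactly the coefficient `ϑ^σ(γ)` puts in front of
`c γ'` at the index `γ γ' γ⁻¹`. Applying the bounded operator `π γ` to the series for
`π(c) (π γ)* g` and reindexing by the bijection `γ' ↦ γ γ' γ⁻¹` therefore gives the series for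
`π(ϑ^σ(γ) c) g`. Since `|σ| = 1`, `ϑ^σ(γ) c` has the same moduli as `c` up to that
reindexing, so it stays in `ℓ^p`.
-/

theorem Memℓp.comp_equiv {α β E : Type*} [NormedAddCommGroup E] {p : ℝ≥0∞} {f : α → E}
    (hf : Memℓp f p) (e : β ≃ α) : Memℓp (f ∘ e) p := by
  obtain rfl | rfl | hp := p.trichotomy
  · exact memℓp_zero <| (memℓp_zero_iff.mp hf).preimage e.injective.injOn
  · exact memℓp_infty <| (memℓp_infty_iff.mp hf).mono (Set.range_comp_subset_range e (‖f ·‖))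
  · exact memℓp_gen <| e.summable_iff.mpr (hf.summable hp)

theorem cocycle_mul_conj {Γ K : Type*} [Group Γ] [Field K] {σ : Γ → Γ → K}
    (hco : ∀ x y z : Γ, σ x (y * z) * σ y z = σ (x * y) z * σ x y)
    (hn : ∀ x : Γ, σ x 1 = 1 ∧ σ 1 x = 1) (hne : ∀ x y : Γ, σ x y ≠ 0) (γ γ' : Γ) :
    σ γ γ' * σ γ⁻¹ (γ * γ' * γ⁻¹) = σ (γ * γ' * γ⁻¹) γ * σ γ' γ⁻¹ := by
  have hA := hco γ⁻¹ (γ * γ' * γ⁻¹) γ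
  rw [show γ * γ' * γ⁻¹ * γ = γ * γ' by group,
    show γ⁻¹ * (γ * γ' * γ⁻¹) = γ' * γ⁻¹ by group] at hA
  have hB := hco γ⁻¹ γ γ'
  rw [inv_mul_cancel, (hn γ').2] at hB
  have hC := hco γ' γ⁻¹ γ
  rw [inv_mul_cancel, (hn γ').1] at hC
  refine mul_right_cancel₀ (hne (γ' * γ⁻¹) γ) ?_
  linear_combination -σ γ γ' * hA + σ (γ * γ' * γ⁻¹) γ * hB + σ (γ * γ' * γ⁻¹) γ * hC

section TwistedConj

variable {Γ : Type*} [Group Γ] {H : Type*} [NormedAddCommGroup H] [InnerProductSpace ℂ H]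
  {σ : Γ → Γ → ℂ} {π : Γ → H ≃ₗᵢ[ℂ] H}

/-- The sequence `ϑ^σ(γ) c`. -/
def twistedConj (σ : Γ → Γ → ℂ) (γ : Γ) (c : Γ → ℂ) : Γ → ℂ := fun γ' =>
  starRingEnd ℂ (σ γ⁻¹ γ') * σ (γ⁻¹ * γ' * γ) γ⁻¹ * c (γ⁻¹ * γ' * γ)

theorem twistedConj_conj_apply (γ γ' : Γ) (c : Γ → ℂ) :
    twistedConj σ γ c (γ * γ' * γ⁻¹) =
      starRingEnd ℂ (σ γ⁻¹ (γ * γ' * γ⁻¹)) * σ γ' γ⁻¹ * c γ' := by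
  simp only [twistedConj, show γ⁻¹ * (γ * γ' * γ⁻¹) * γ = γ' by group]

theorem Memℓp.twistedConj {p : ℝ≥0∞} {c : Γ → ℂ} (hσ : ∀ x y : Γ, ‖σ x y‖ = 1)
    (hc : Memℓp c p) (γ : Γ) : Memℓp (twistedConj σ γ c) p :=
  (hc.comp_equiv (MulAut.conj γ⁻¹).toEquiv).mono' fun γ' => by
    simp [_root_.twistedConj, hσ]

namespace IsProjectiveRep

theorem ne_zero (hrep : IsProjectiveRep σ π) (x y : Γ) : σ x y ≠ 0 := by
  simp [← norm_ne_zero_iff, hrep.1 x y]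

theorem apply_apply_symm (hrep : IsProjectiveRep σ π) (γ γ' : Γ) (g : H) :
    π γ (π γ' ((π γ).symm g)) =
      (starRingEnd ℂ (σ γ⁻¹ (γ * γ' * γ⁻¹)) * σ γ' γ⁻¹) • π (γ * γ' * γ⁻¹) g := by
  have hne := hrep.ne_zero
  obtain ⟨hσ, hco, hn, -, hmul⟩ := hrep
  have hconj : π (γ * γ') ((π γ).symm g) = (σ (γ * γ' * γ⁻¹) γ)⁻¹ • π (γ * γ' * γ⁻¹) g := by
    have h := hmul (γ * γ' * γ⁻¹) γ ((π γ).symm g)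
    rw [LinearIsometryEquiv.apply_symm_apply, show γ * γ' * γ⁻¹ * γ = γ * γ' by group] at h
    rw [h, smul_smul, inv_mul_cancel₀ (hne _ _), one_smul]
  rw [hmul, hconj, smul_smul, ← Complex.inv_eq_conj (hσ _ _)]
  congr 1
  field_simp [hne]
  linear_combination cocycle_mul_conj hco hn hne γ γ'

theorem hasSum_twistedConj (hrep : IsProjectiveRep σ π) {c : Γ → ℂ} {γ : Γ} {g v : H}
    (hv : HasSum (fun γ' => c γ' • π γ' ((π γ).symm g)) v) :
    HasSum (fun γ' => twistedConj σ γ c γ' • π γ' g) (π γ v) := by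
  rw [← (MulAut.conj γ).toEquiv.hasSum_iff]
  convert hv.map (π γ) (π γ).continuous using 1
  funext γ'
  simp only [Function.comp_apply, MulEquiv.toEquiv_eq_coe, EquivLike.coe_coe, map_smul,
    hrep.apply_apply_symm, smul_smul, MulAut.conj_apply, twistedConj_conj_apply]
  congr 1
  ring

end IsProjectiveRep

end TwistedConj

theorem stmt_4_general
    {Γ : Type*} [Group Γ]
    {H : Type*} [NormedAddCommGroup H] [InnerProductSpace ℂ H]
    (σ : Γ → Γ → ℂ) (π : Γ → H ≃ₗᵢ[ℂ] H)
    (hrep : IsProjectiveRep σ π)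
    (c : Γ → ℂ) (hc : Memℓp c 2) (γ : Γ) :
    Memℓp (fun γ' : Γ =>
      (starRingEnd ℂ) (σ γ⁻¹ γ') * σ (γ⁻¹ * γ' * γ) γ⁻¹ * c (γ⁻¹ * γ' * γ)) 2 ∧
    ∀ g : H, IsBesselVector π g → ∀ v : H,
      HasSum (fun γ' : Γ => c γ' • π γ' ((π γ).symm g)) v →
      HasSum (fun γ' : Γ =>
        ((starRingEnd ℂ) (σ γ⁻¹ γ') * σ (γ⁻¹ * γ' * γ) γ⁻¹ * c (γ⁻¹ * γ' * γ)) • π γ' g)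
        (π γ v) :=
  ⟨hc.twistedConj hrep.1 γ, fun _ _ _ hv => hrep.hasSum_twistedConj hv⟩

theorem stmt_4
    {Γ : Type*} [Group Γ] [Countable Γ]
    {H : Type*} [NormedAddCommGroup H] [InnerProductSpace ℂ H] [CompleteSpace H]
    [TopologicalSpace.SeparableSpace H]
    (σ : Γ → Γ → ℂ) (π : Γ → H ≃ₗᵢ[ℂ] H)
    (hrep : IsProjectiveRep σ π)
    (hsq : IsSquareIntegrableRep π)
    (c : Γ → ℂ) (hc : Memℓp c 2) (γ : Γ) :
    Memℓp (fun γ' : Γ =>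
      (starRingEnd ℂ) (σ γ⁻¹ γ') * σ (γ⁻¹ * γ' * γ) γ⁻¹ * c (γ⁻¹ * γ' * γ)) 2 ∧
    ∀ g : H, IsBesselVector π g → ∀ v : H,
      HasSum (fun γ' : Γ => c γ' • π γ' ((π γ).symm g)) v →
      HasSum (fun γ' : Γ =>
        ((starRingEnd ℂ) (σ γ⁻¹ γ') * σ (γ⁻¹ * γ' * γ) γ⁻¹ * c (γ⁻¹ * γ' * γ)) • π γ' g)
        (π γ v) :=
  stmt_4_general σ π hrep c hc γ
end
end

section
/- Let (π, H) be a square-integrable σ-representation of a countable discrete group Γ on a separable complex Hilbert space H, and suppose (Γ, σ) satisfies Kleppner's condition. If g ∈ H is such that π(Γ)g is a Riesz sequence in H, then g is a separating vector for π(Γ)'': every T ∈ π(Γ)'' with Tg = 0 satisfies T = 0. -/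
open MeasureTheory
open scoped ENNReal ComplexInnerProductSpace

noncomputable section

/-! The Riesz property of `π(Γ)g` makes the Gram operator `G = C Cᴴ` of the analysis operator
`C f = (⟪π γ g, f⟫)_γ` invertible on `ℓ²(Γ)`. Analysis operators intertwine `π` with the
`σ`-twisted left regular representation `λ`, so `G` commutes with `λ`, and for every `g'` with
square-summable coefficients `S = C'ᴴ G⁻¹ C` lies in the commutant `π(Γ)'`; since
`Cᴴ δ₁ = g`, it maps `g` to `g'`. An operator `T ∈ π(Γ)''` with `T g = 0` therefore satisfies
`T g' = S (T g) = 0` on the dense set of such `g'`. -/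

local notation "ℓ²(" ι ")" => lp (fun _ : ι => ℂ) 2

lemma summable_norm_inner_sq_of_norm_sum_sq_le {ι : Type*} {H : Type*} [NormedAddCommGroup H]
    [InnerProductSpace ℂ H] {v : ι → H} {B : ℝ} (hB0 : 0 ≤ B)
    (hB : ∀ (s : Finset ι) (c : ι → ℂ), ‖∑ i ∈ s, c i • v i‖ ^ 2 ≤ B * ∑ i ∈ s, ‖c i‖ ^ 2)
    (f : H) : Summable fun i => ‖⟪v i, f⟫‖ ^ 2 := by
  refine summable_of_sum_le (c := B * ‖f‖ ^ 2) (fun i => sq_nonneg _) fun s => ?_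
  set t := ∑ i ∈ s, ‖⟪v i, f⟫‖ ^ 2
  set w := ∑ i ∈ s, ⟪v i, f⟫ • v i
  have ht : 0 ≤ t := Finset.sum_nonneg fun _ _ => sq_nonneg _
  have hinner : ⟪f, w⟫ = (t : ℂ) := by
    simp only [w, t, inner_sum, inner_smul_right, ← inner_conj_symm f (v _), RCLike.mul_conj]
    push_cast
    rfl
  have htw : t ≤ ‖f‖ * ‖w‖ := by
    simpa [hinner, abs_of_nonneg ht] using norm_inner_le_norm (𝕜 := ℂ) f w
  have hw : ‖w‖ ^ 2 ≤ B * t := hB s _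
  rcases ht.eq_or_lt with ht0 | ht0
  · rw [← ht0]; positivity
  · nlinarith [mul_le_mul htw htw ht (by positivity), mul_le_mul_of_nonneg_left hw (sq_nonneg ‖f‖)]

lemma isUnit_comp_adjoint_of_mul_norm_sq_le {𝕜 E F : Type*} [RCLike 𝕜]
    [NormedAddCommGroup E] [InnerProductSpace 𝕜 E] [CompleteSpace E]
    [NormedAddCommGroup F] [InnerProductSpace 𝕜 F] [CompleteSpace F]
    (C : E →L[𝕜] F) {A : ℝ} (hA : 0 < A) (h : ∀ c, A * ‖c‖ ^ 2 ≤ ‖C.adjoint c‖ ^ 2) :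
    IsUnit (C ∘L C.adjoint) := by
  refine C.comp C.adjoint |>.isUnit_of_forall_le_norm_inner_map (c := A.toNNReal)
    (Real.toNNReal_pos.mpr hA) fun c => ?_
  rw [ContinuousLinearMap.comp_apply, ← ContinuousLinearMap.adjoint_inner_right,
    inner_self_eq_norm_sq_to_K, Real.coe_toNNReal _ hA.le, mul_comm]
  simpa using h c

section AnalysisOperator

variable {ι : Type*} {H : Type*} [NormedAddCommGroup H] [InnerProductSpace ℂ H] [CompleteSpace H]

lemma lp_two_hasSum_norm_sq (c : ℓ²(ι)) : HasSum (fun i => ‖c i‖ ^ 2) (‖c‖ ^ 2) := by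
  simpa using lp.hasSum_norm (p := 2) (by norm_num) c

def analysisOperator (v : ι → H) (hv : ∀ f, Summable fun i => ‖⟪v i, f⟫‖ ^ 2) : H →L[ℂ] ℓ²(ι) :=
  let C : H →ₗ[ℂ] ℓ²(ι) :=
    { toFun := fun f => ⟨fun i => ⟪v i, f⟫, memℓp_gen (by simpa using hv f)⟩
      map_add' := fun f f' => lp.ext <| funext fun i => inner_add_right _ _ _
      map_smul' := fun a f => lp.ext <| funext fun i => inner_smul_right _ _ _ }
  have hgraph : IsClosed (C.graph : Set (H × ℓ²(ι))) := by
    have : (C.graph : Set (H × ℓ²(ι))) = ⋂ i, {p | p.2 i = ⟪v i, p.1⟫} := by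
      ext p
      simp only [SetLike.mem_coe, LinearMap.mem_graph_iff, Set.mem_iInter, Set.mem_ofPred_eq]
      exact ⟨fun h i => h ▸ rfl, fun h => lp.ext (funext h)⟩
    rw [this]
    exact isClosed_iInter fun i => isClosed_eq ((lp.evalCLM ℂ _ 2 i).continuous.comp
      continuous_snd) ((innerSL ℂ (v i)).continuous.comp continuous_fst)
  ⟨C, C.continuous_of_isClosed_graph hgraph⟩

variable (v : ι → H) (hv : ∀ f, Summable fun i => ‖⟪v i, f⟫‖ ^ 2)

@[simp]
lemma analysisOperator_apply (f : H) (i : ι) : analysisOperator v hv f i = ⟪v i, f⟫ := rfl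

lemma adjoint_analysisOperator_single [DecidableEq ι] (i : ι) (a : ℂ) :
    (analysisOperator v hv).adjoint (lp.single 2 i a) = a • v i := by
  refine ext_inner_right ℂ fun f => ?_
  rw [ContinuousLinearMap.adjoint_inner_left, lp.inner_single_left, analysisOperator_apply,
    inner_smul_left, RCLike.inner_apply, mul_comm]

lemma hasSum_adjoint_analysisOperator (c : ℓ²(ι)) :
    HasSum (fun i => c i • v i) ((analysisOperator v hv).adjoint c) := by
  classical
  simpa only [adjoint_analysisOperator_single] using
    (lp.hasSum_single (by norm_num) c).mapL (analysisOperator v hv).adjoint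

lemma mul_norm_sq_le_norm_adjoint_analysisOperator_sq {A : ℝ}
    (hA : ∀ (s : Finset ι) (c : ι → ℂ), A * ∑ i ∈ s, ‖c i‖ ^ 2 ≤ ‖∑ i ∈ s, c i • v i‖ ^ 2)
    (c : ℓ²(ι)) : A * ‖c‖ ^ 2 ≤ ‖(analysisOperator v hv).adjoint c‖ ^ 2 :=
  le_of_tendsto_of_tendsto' ((lp_two_hasSum_norm_sq c).const_mul A)
    (((continuous_norm.pow 2).tendsto _).comp (hasSum_adjoint_analysisOperator v hv c))
    fun s => hA s c

end AnalysisOperator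

section TwistedLeftRegular

variable {ι : Type*}

def weightedCompCLM (e : ι ≃ ι) (w : ι → ℂ) (hw : ∀ i, ‖w i‖ ≤ 1) : ℓ²(ι) →L[ℂ] ℓ²(ι) :=
  have hle (c : ℓ²(ι)) (i : ι) : ‖w i * c (e i)‖ ≤ ‖c (e i)‖ := by
    simpa [norm_mul] using mul_le_mul_of_nonneg_right (hw i) (norm_nonneg (c (e i)))
  LinearMap.mkContinuous
    { toFun := fun c => ⟨fun i => w i * c (e i),
        (memℓp_gen (e.summable_iff.2 ((lp.memℓp c).summable (by norm_num)))).mono' (hle c)⟩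
      map_add' := fun c c' => lp.ext <| funext fun i => mul_add _ _ _
      map_smul' := fun a c => lp.ext <| funext fun i => mul_left_comm _ _ _ } 1
    fun c => by
      rw [one_mul]
      refine lp.norm_le_of_forall_sum_le (by norm_num) (norm_nonneg c) fun s => ?_
      calc ∑ i ∈ s, ‖w i * c (e i)‖ ^ (2 : ℝ≥0∞).toReal
          ≤ ∑ i ∈ s.map e.toEmbedding, ‖c i‖ ^ (2 : ℝ≥0∞).toReal := by
            rw [Finset.sum_map]
            gcongr with i
            exact hle c i
        _ ≤ ‖c‖ ^ (2 : ℝ≥0∞).toReal := lp.sum_rpow_le_norm_rpow (by norm_num) c _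

variable {Γ : Type*} [Group Γ] {σ : Γ → Γ → ℂ} (hσ : ∀ x y, ‖σ x y‖ = 1)

def twistedLeftRegular (x : Γ) : ℓ²(Γ) →L[ℂ] ℓ²(Γ) :=
  weightedCompCLM (Equiv.mulLeft x⁻¹) (fun γ => σ x (x⁻¹ * γ)) fun _ => (hσ _ _).le

lemma twistedLeftRegular_apply (x : Γ) (c : ℓ²(Γ)) (γ : Γ) :
    twistedLeftRegular hσ x c γ = σ x (x⁻¹ * γ) * c (x⁻¹ * γ) := rfl

lemma twistedLeftRegular_single [DecidableEq Γ] (x γ : Γ) (a : ℂ) :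
    twistedLeftRegular hσ x (lp.single 2 γ a) = lp.single 2 (x * γ) (σ x γ * a) := by
  ext η
  rw [twistedLeftRegular_apply, lp.single_apply, lp.single_apply]
  rcases eq_or_ne η (x * γ) with rfl | hη
  · simp
  · have : x⁻¹ * η ≠ γ := fun h => hη (by rw [← h, mul_inv_cancel_left])
    simp [hη, this]

end TwistedLeftRegular

section ProjectiveRep

open ContinuousLinearMap

variable {Γ : Type*} [Group Γ] {σ : Γ → Γ → ℂ} (hσ : ∀ x y, ‖σ x y‖ = 1)
  {H : Type*} [NormedAddCommGroup H] [InnerProductSpace ℂ H] [CompleteSpace H]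
  {π : Γ → H ≃ₗᵢ[ℂ] H} {h : H} {hh : ∀ f, Summable fun γ => ‖⟪π γ h, f⟫‖ ^ 2}

lemma analysisOperator_map_rep
    (hmul : ∀ x y : Γ, ∀ f : H, π x (π y f) = σ x y • π (x * y) f) (x : Γ) (f : H) :
    analysisOperator (fun γ => π γ h) hh (π x f) =
      twistedLeftRegular hσ x (analysisOperator _ hh f) := by
  ext γ
  rw [twistedLeftRegular_apply, analysisOperator_apply, analysisOperator_apply,
    ← (π x).inner_map_map (π (x⁻¹ * γ) h), hmul, mul_inv_cancel_left, inner_smul_left,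
    ← mul_assoc, Complex.mul_conj, Complex.normSq_eq_norm_sq, hσ, one_pow, Complex.ofReal_one,
    one_mul]

lemma adjoint_analysisOperator_twistedLeftRegular
    (hmul : ∀ x y : Γ, ∀ f : H, π x (π y f) = σ x y • π (x * y) f) (x : Γ) (c : ℓ²(Γ)) :
    (analysisOperator _ hh).adjoint (twistedLeftRegular hσ x c) =
      π x ((analysisOperator _ hh).adjoint c) := by
  classical
  have key : (analysisOperator _ hh).adjoint ∘L twistedLeftRegular hσ x =
      ((π x).toContinuousLinearEquiv : H →L[ℂ] H) ∘L (analysisOperator _ hh).adjoint :=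
    lp.ext_continuousLinearMap (by norm_num) fun γ => ContinuousLinearMap.ext fun a => by
      simp [twistedLeftRegular_single, adjoint_analysisOperator_single, hmul, smul_smul, mul_comm]
  exact congr($key c)

lemma commute_analysisOperator_comp_adjoint_twistedLeftRegular
    (hmul : ∀ x y : Γ, ∀ f : H, π x (π y f) = σ x y • π (x * y) f) (x : Γ) :
    Commute (analysisOperator _ hh ∘L (analysisOperator _ hh).adjoint)
      (twistedLeftRegular hσ x) := by
  rw [Commute, SemiconjBy]
  ext1 c
  rw [mul_apply_eq_comp, mul_apply_eq_comp, comp_apply, comp_apply,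
    adjoint_analysisOperator_twistedLeftRegular hσ hmul, analysisOperator_map_rep hσ hmul]

end ProjectiveRep

open ContinuousLinearMap in
lemma exists_mem_repCommutant_apply_eq {Γ : Type*} [Group Γ] {σ : Γ → Γ → ℂ}
    {H : Type*} [NormedAddCommGroup H] [InnerProductSpace ℂ H] [CompleteSpace H]
    {π : Γ → H ≃ₗᵢ[ℂ] H} (hσ : ∀ x y, ‖σ x y‖ = 1) (hone : π 1 = LinearIsometryEquiv.refl ℂ H)
    (hmul : ∀ x y : Γ, ∀ f : H, π x (π y f) = σ x y • π (x * y) f)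
    {g : H} (hg : IsRieszSequence π g) {g' : H}
    (hg' : ∀ f, Summable fun γ => ‖⟪π γ g', f⟫‖ ^ 2) :
    ∃ S ∈ RepCommutant π, S g = g' := by
  classical
  obtain ⟨A, B, hA, hB, hRiesz⟩ := hg
  set C := analysisOperator (fun γ => π γ g)
    (summable_norm_inner_sq_of_norm_sum_sq_le hB.le fun s c => (hRiesz s c).2)
  set C' := analysisOperator (fun γ => π γ g') hg'
  obtain ⟨u, hu⟩ := isUnit_comp_adjoint_of_mul_norm_sq_le C hA
    (mul_norm_sq_le_norm_adjoint_analysisOperator_sq _ _ fun s c => (hRiesz s c).1)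
  have hsynth_one (h : H) (hh) :
      (analysisOperator (fun γ => π γ h) hh).adjoint (lp.single 2 1 1) = h := by
    rw [adjoint_analysisOperator_single, one_smul, hone]
    rfl
  refine ⟨C'.adjoint ∘L (↑u⁻¹ ∘L C), fun x f => ?_, ?_⟩
  · have hcomm : Commute (↑u⁻¹ : ℓ²(Γ) →L[ℂ] ℓ²(Γ)) (twistedLeftRegular hσ x) :=
      (hu ▸ commute_analysisOperator_comp_adjoint_twistedLeftRegular hσ hmul x).units_inv_left
    rw [comp_apply, comp_apply, comp_apply, comp_apply, analysisOperator_map_rep hσ hmul,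
      ← mul_apply_eq_comp _ (twistedLeftRegular hσ x), hcomm.eq, mul_apply_eq_comp,
      adjoint_analysisOperator_twistedLeftRegular hσ hmul]
  · have hCg : C g = (C ∘L C.adjoint) (lp.single 2 1 1) := by rw [comp_apply, hsynth_one]
    rw [comp_apply, comp_apply, hCg, ← hu, ← mul_apply_eq_comp, Units.inv_mul, one_apply_eq_self,
      hsynth_one]

theorem stmt_9_general
    {Γ : Type*} [Group Γ]
    {H : Type*} [NormedAddCommGroup H] [InnerProductSpace ℂ H] [CompleteSpace H]
    (σ : Γ → Γ → ℂ) (π : Γ → H ≃ₗᵢ[ℂ] H)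
    (hrep : IsProjectiveRep σ π)
    (hsq : IsSquareIntegrableRep π)
    (g : H) (hg : IsRieszSequence π g) :
    IsSeparatingVector π g := by
  intro T hT hTg
  obtain ⟨hσ, -, -, hone, hmul⟩ := hrep
  obtain ⟨D, hD, hDsum⟩ := hsq
  have hvanish : ⇑T = fun _ => 0 := Continuous.ext_on hD T.continuous continuous_const
    fun g' hg' => by
      obtain ⟨S, hS, rfl⟩ := exists_mem_repCommutant_apply_eq hσ hone hmul hg
        fun f => by simpa only [norm_inner_symm] using hDsum f g' hg'
      rw [hT S hS g, hTg, map_zero]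
  exact ContinuousLinearMap.ext (congr_fun hvanish)

theorem stmt_9
    {Γ : Type*} [Group Γ] [Countable Γ]
    {H : Type*} [NormedAddCommGroup H] [InnerProductSpace ℂ H] [CompleteSpace H]
    [TopologicalSpace.SeparableSpace H]
    (σ : Γ → Γ → ℂ) (π : Γ → H ≃ₗᵢ[ℂ] H)
    (hrep : IsProjectiveRep σ π)
    (hsq : IsSquareIntegrableRep π)
    (hK : KleppnerCondition σ)
    (g : H) (hg : IsRieszSequence π g) :
    IsSeparatingVector π g :=
  stmt_9_general σ π hrep hsq g hg
end
end

section
/- Let G be a second countable unimodular locally compact group with Haar measure μ_G, let Γ ⊆ G be a lattice, and let (π, H) be a discrete series σ-representation of G of formal dimension d_π > 0. Suppose g ∈ H is a unit vector such that π(Γ)g is an orthonormal system in H (⟨π(γ)g, π(γ')g⟩ = δ_{γ,γ'}). Then the following are equivalent: (i) the closed linear span of {π(γ)g : γ ∈ Γ} equals H; (ii) vol(G/Γ)·d_π = 1. -/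
open MeasureTheory
open scoped ENNReal ComplexInnerProductSpace

noncomputable section

/-!
Unfolding the orthogonality relations over the fundamental domain `Ω` gives, for every `u`,
`∫_Ω ∑_γ |⟪π γ g, π(x)⁻¹ u⟫|² dx = d⁻¹ ‖u‖²`. By Bessel's inequality the integrand is at most
`‖u‖²`, with equality exactly when `π(x)⁻¹ u` lies in the closed span of `π(Γ) g`. If that span
is `H`, the integrand is constantly `‖u‖²` and `μ Ω = d⁻¹`. Conversely, if `μ Ω = d⁻¹`, equality
holds for almost every `x`; choosing one `x` that works for a countable dense set of `u`, the
unitary `π(x)⁻¹` maps `H` into the span, which is therefore all of `H`.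
-/

open Set Submodule
open scoped InnerProductSpace

section Bessel

variable {𝕜 E ι : Type*} [RCLike 𝕜] [NormedAddCommGroup E] [InnerProductSpace 𝕜 E]
  [CompleteSpace E] {v : ι → E}

theorem Orthonormal.hasSum_norm_inner_sq_starProjection (hv : Orthonormal 𝕜 v) (u : E) :
    HasSum (fun i => ‖⟪v i, u⟫_𝕜‖ ^ 2)
      (‖(span 𝕜 (range v)).topologicalClosure.starProjection u‖ ^ 2) := by
  set W := (span 𝕜 (range v)).topologicalClosure
  have hvW : ∀ i, v i ∈ W := fun i => le_topologicalClosure _ (subset_span (mem_range_self i))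
  let e : ι → W := fun i => ⟨v i, hvW i⟩
  have he : Orthonormal 𝕜 e := hv.codRestrict W hvW
  have hspan : Subtype.val '' (span 𝕜 (range e) : Set W) = span 𝕜 (range v) := by
    rw [← W.coe_subtype, ← map_coe, map_span, ← range_comp]
    rfl
  have hdense : ⊤ ≤ (span 𝕜 (range e)).topologicalClosure := fun w _ => by
    rw [← SetLike.mem_coe, topologicalClosure_coe, closure_subtype, hspan,
      ← topologicalClosure_coe]
    exact w.2
  let b := HilbertBasis.mk he hdense
  have hb : ∀ i, (b i : E) = v i := fun i => by simp [b, e]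
  have hinner : ∀ i, ⟪v i, u⟫_𝕜 = ⟪v i, W.starProjection u⟫_𝕜 := fun i => by
    rw [← inner_starProjection_left_eq_right, starProjection_eq_self_iff.mpr (hvW i)]
  set w := W.orthogonalProjectionOnto u
  have hterm : ∀ i, ⟪w, b i⟫_𝕜 * ⟪b i, w⟫_𝕜 = ((‖⟪v i, u⟫_𝕜‖ ^ 2 : ℝ) : 𝕜) := fun i => by
    rw [← inner_conj_symm, RCLike.conj_mul, coe_inner, hb, ← starProjection_apply, ← hinner]
    norm_cast
  have hparseval := RCLike.reCLM.hasSum (b.hasSum_inner_mul_inner w w)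
  simp only [RCLike.reCLM_apply, hterm, RCLike.ofReal_re, inner_self_eq_norm_sq] at hparseval
  exact hparseval

theorem Orthonormal.tsum_ofReal_norm_inner_sq (hv : Orthonormal 𝕜 v) (u : E) :
    ∑' i, ENNReal.ofReal (‖⟪v i, u⟫_𝕜‖ ^ 2) =
      ENNReal.ofReal (‖(span 𝕜 (range v)).topologicalClosure.starProjection u‖ ^ 2) := by
  have h := hv.hasSum_norm_inner_sq_starProjection u
  rw [← ENNReal.ofReal_tsum_of_nonneg (fun _ => by positivity) h.summable, h.tsum_eq]

theorem Orthonormal.tsum_ofReal_norm_inner_sq_le (hv : Orthonormal 𝕜 v) (u : E) :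
    ∑' i, ENNReal.ofReal (‖⟪v i, u⟫_𝕜‖ ^ 2) ≤ ENNReal.ofReal (‖u‖ ^ 2) := by
  rw [hv.tsum_ofReal_norm_inner_sq]
  gcongr
  exact norm_starProjection_apply_le _ u

theorem Orthonormal.tsum_ofReal_norm_inner_sq_eq_iff (hv : Orthonormal 𝕜 v) (u : E) :
    ∑' i, ENNReal.ofReal (‖⟪v i, u⟫_𝕜‖ ^ 2) = ENNReal.ofReal (‖u‖ ^ 2) ↔
      u ∈ (span 𝕜 (range v)).topologicalClosure := by
  set W := (span 𝕜 (range v)).topologicalClosure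
  rw [hv.tsum_ofReal_norm_inner_sq, ENNReal.ofReal_eq_ofReal_iff (by positivity) (by positivity),
    norm_sq_eq_add_norm_sq_starProjection u W, left_eq_add, sq_eq_zero_iff, norm_eq_zero,
    starProjection_apply_eq_zero_iff, orthogonal_orthogonal]

end Bessel

section Unfolding

variable {G : Type*} [Group G] [MeasurableSpace G] {μ : Measure G} {Γ : Subgroup G} {Ω : Set G}

theorem isFundamentalDomain_op_of_existsUnique_mul_inv_mem (hΩ : NullMeasurableSet Ω μ)
    (htile : ∀ x : G, ∃! γ : Γ, x * (γ : G)⁻¹ ∈ Ω) : IsFundamentalDomain Γ.op Ω μ := by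
  refine .mk' hΩ fun x => ?_
  obtain ⟨γ, hγ, huniq⟩ := htile x
  refine ⟨Γ.equivOp γ⁻¹, hγ, fun g hg => ?_⟩
  have hg' : x * ((Γ.equivOp.symm g)⁻¹ : Γ)⁻¹ ∈ Ω := by rw [inv_inv]; exact hg
  rw [← Γ.equivOp.apply_symm_apply g, ← inv_inv (Γ.equivOp.symm g), huniq _ hg']

variable [MeasurableMul G] [μ.IsMulRightInvariant] [Countable Γ]

theorem MeasureTheory.IsFundamentalDomain.lintegral_eq_setLIntegral_tsum_mul
    (h : IsFundamentalDomain Γ.op Ω μ) {f : G → ℝ≥0∞} (hf : Measurable f) :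
    ∫⁻ x, f x ∂μ = ∫⁻ x in Ω, ∑' γ : Γ, f (x * γ) ∂μ := by
  rw [h.lintegral_eq_tsum'',
    lintegral_tsum (f := fun (γ : Γ) x => f (x * γ)) fun γ =>
      (hf.comp (measurable_mul_const (γ : G))).aemeasurable]
  exact (Γ.equivOp.tsum_eq _).symm

end Unfolding

theorem IsProjectiveRep.norm_inner_mul {G H : Type*} [Group G] [NormedAddCommGroup H]
    [InnerProductSpace ℂ H] {σ : G → G → ℂ} {π : G → H ≃ₗᵢ[ℂ] H} (hrep : IsProjectiveRep σ π)
    (x y : G) (f u : H) : ‖⟪π (x * y) f, u⟫‖ = ‖⟪π y f, (π x).symm u⟫‖ := by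
  rw [← (π x).inner_map_map (π y f), LinearIsometryEquiv.apply_symm_apply, hrep.2.2.2.2,
    inner_smul_left, norm_mul, RCLike.norm_conj, hrep.1, one_mul]

theorem lintegral_ofReal_norm_inner_sq_of_orthogonality {X H : Type*} [MeasurableSpace X]
    {μ : Measure X} [NormedAddCommGroup H] [InnerProductSpace ℂ H] {π : X → H ≃ₗᵢ[ℂ] H} {d : ℝ}
    (hd : 0 < d)
    (hortho : ∀ f₁ f₂ g₁ g₂ : H,
      ∫ x, ⟪π x f₁, g₁⟫ * (starRingEnd ℂ) ⟪π x f₂, g₂⟫ ∂μ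
        = (d : ℂ)⁻¹ * (⟪f₁, f₂⟫ * (starRingEnd ℂ) ⟪g₁, g₂⟫))
    (f u : H) :
    ∫⁻ x, ENNReal.ofReal (‖⟪π x f, u⟫‖ ^ 2) ∂μ = ENNReal.ofReal (d⁻¹ * ‖f‖ ^ 2 * ‖u‖ ^ 2) := by
  rcases eq_or_ne f 0 with rfl | hf
  · simp
  rcases eq_or_ne u 0 with rfl | hu
  · simp
  have hint : ∫ x, ‖⟪π x f, u⟫‖ ^ 2 ∂μ = d⁻¹ * ‖f‖ ^ 2 * ‖u‖ ^ 2 := by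
    have h := hortho f f u u
    simp only [RCLike.mul_conj, inner_self_eq_norm_sq_to_K, map_pow, RCLike.conj_ofReal] at h
    apply Complex.ofReal_injective
    rw [← integral_complex_ofReal, mul_assoc]
    push_cast
    exact h
  have hpos : 0 < d⁻¹ * ‖f‖ ^ 2 * ‖u‖ ^ 2 := by positivity
  -- a non-integrable function has Bochner integral `0`
  rw [← hint, ofReal_integral_eq_lintegral_ofReal (.of_integral_ne_zero (hint ▸ hpos.ne'))
    (ae_of_all _ fun _ => by positivity)]

theorem setLIntegral_tsum_ofReal_norm_inner_sq {G H : Type*} [Group G] [MeasurableSpace G]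
    [MeasurableMul G] {μ : Measure G} [μ.IsMulRightInvariant] [NormedAddCommGroup H]
    [InnerProductSpace ℂ H] {σ : G → G → ℂ} {π : G → H ≃ₗᵢ[ℂ] H} (hrep : IsProjectiveRep σ π)
    {d : ℝ} (hd : 0 < d)
    (hortho : ∀ f₁ f₂ g₁ g₂ : H,
      ∫ x, ⟪π x f₁, g₁⟫ * (starRingEnd ℂ) ⟪π x f₂, g₂⟫ ∂μ
        = (d : ℂ)⁻¹ * (⟪f₁, f₂⟫ * (starRingEnd ℂ) ⟪g₁, g₂⟫))
    {Γ : Subgroup G} [Countable Γ] {Ω : Set G} (hΩ : IsFundamentalDomain Γ.op Ω μ) {f u : H}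
    (hmeas : Measurable fun x : G => ⟪π x f, u⟫) :
    ∫⁻ x in Ω, ∑' γ : Γ, ENNReal.ofReal (‖⟪π γ f, (π x).symm u⟫‖ ^ 2) ∂μ
      = ENNReal.ofReal (d⁻¹ * ‖f‖ ^ 2 * ‖u‖ ^ 2) := by
  have h := hΩ.lintegral_eq_setLIntegral_tsum_mul (hmeas.norm.pow_const 2).ennreal_ofReal
  simp_rw [hrep.norm_inner_mul] at h
  rw [← h, lintegral_ofReal_norm_inner_sq_of_orthogonality hd hortho]

section TightFrame

variable {X 𝕜 E ι : Type*} [MeasurableSpace X] {ν : Measure X} [RCLike 𝕜] [NormedAddCommGroup E]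
  [InnerProductSpace 𝕜 E]

theorem Submodule.eq_top_of_ae_apply_mem [NeZero ν] [TopologicalSpace.SeparableSpace E]
    (T : X → E ≃ₗᵢ[𝕜] E) {V : Submodule 𝕜 E} (hV : IsClosed (V : Set E))
    (h : ∀ u, ∀ᵐ x ∂ν, T x u ∈ V) : V = ⊤ := by
  obtain ⟨x, hx⟩ := (ae_all_iff.2 fun n => h (TopologicalSpace.denseSeq E n)).exists
  have hTx : ∀ u, T x u ∈ V := fun u =>
    (TopologicalSpace.denseRange_denseSeq E).induction_on u (hV.preimage (T x).continuous) hx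
  exact eq_top_iff'.2 fun w => by simpa using hTx ((T x).symm w)

variable [CompleteSpace E] {v : ι → E} {T : X → E ≃ₗᵢ[𝕜] E} {c : ℝ}

theorem Orthonormal.measure_univ_eq_of_lintegral_tsum_eq (hv : Orthonormal 𝕜 v)
    (hT : ∀ u, ∫⁻ x, ∑' i, ENNReal.ofReal (‖⟪v i, T x u⟫_𝕜‖ ^ 2) ∂ν
      = ENNReal.ofReal (c * ‖u‖ ^ 2))
    (htop : (span 𝕜 (range v)).topologicalClosure = ⊤) {u : E} (hu : ‖u‖ = 1) :
    ν univ = ENNReal.ofReal c := by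
  have hsum : ∀ x, ∑' i, ENNReal.ofReal (‖⟪v i, T x u⟫_𝕜‖ ^ 2) = 1 := fun x => by
    rw [(hv.tsum_ofReal_norm_inner_sq_eq_iff _).2 (htop ▸ mem_top), LinearIsometryEquiv.norm_map,
      hu, one_pow, ENNReal.ofReal_one]
  have h := hT u
  simp_rw [hsum] at h
  rwa [lintegral_one, hu, one_pow, mul_one] at h

theorem Orthonormal.topologicalClosure_span_eq_top_of_lintegral_tsum_eq
    [TopologicalSpace.SeparableSpace E] (hv : Orthonormal 𝕜 v)
    (hT : ∀ u, ∫⁻ x, ∑' i, ENNReal.ofReal (‖⟪v i, T x u⟫_𝕜‖ ^ 2) ∂ν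
      = ENNReal.ofReal (c * ‖u‖ ^ 2))
    (hc : 0 < c) (hν : ν univ = ENNReal.ofReal c) :
    (span 𝕜 (range v)).topologicalClosure = ⊤ := by
  have : NeZero ν := ⟨fun h => by
    rw [h, Measure.coe_zero, Pi.zero_apply, eq_comm, ENNReal.ofReal_eq_zero] at hν
    linarith⟩
  refine eq_top_of_ae_apply_mem (ν := ν) T (isClosed_topologicalClosure _) fun u => ?_
  have hle : ∀ x, ∑' i, ENNReal.ofReal (‖⟪v i, T x u⟫_𝕜‖ ^ 2) ≤ ENNReal.ofReal (‖u‖ ^ 2) :=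
    fun x => by simpa using hv.tsum_ofReal_norm_inner_sq_le (T x u)
  -- Bessel's inequality is an equality on average, hence almost everywhere
  have hae := ae_eq_of_ae_le_of_lintegral_le (ae_of_all _ hle)
    (by rw [hT]; exact ENNReal.ofReal_ne_top) aemeasurable_const
    (by rw [hT, lintegral_const, hν, ← ENNReal.ofReal_mul (sq_nonneg _), mul_comm])
  filter_upwards [hae] with x hx
  exact (hv.tsum_ofReal_norm_inner_sq_eq_iff _).1 (by rw [hx, LinearIsometryEquiv.norm_map])

end TightFrame

theorem stmt_16_general
    {G : Type*} [Group G] [TopologicalSpace G] [IsTopologicalGroup G]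
    [MeasurableSpace G] [BorelSpace G]
    (μ : Measure G) [μ.IsMulRightInvariant]
    {H : Type*} [NormedAddCommGroup H] [InnerProductSpace ℂ H] [CompleteSpace H]
    [TopologicalSpace.SeparableSpace H]
    (σ : G → G → ℂ) (π : G → H ≃ₗᵢ[ℂ] H)
    (hrep : IsProjectiveRep σ π)
    (hπ_meas : ∀ f g : H, Measurable fun x : G => ⟪π x f, g⟫)
    (d : ℝ) (hd : 0 < d)
    (hortho : ∀ f₁ f₂ g₁ g₂ : H,
      ∫ x, ⟪π x f₁, g₁⟫ * (starRingEnd ℂ) ⟪π x f₂, g₂⟫ ∂μ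
        = (d : ℂ)⁻¹ * (⟪f₁, f₂⟫ * (starRingEnd ℂ) ⟪g₁, g₂⟫))
    (Γ : Subgroup G) [Countable Γ]
    (Ω : Set G) (hΩ_meas : MeasurableSet Ω) (hΩ_fin : μ Ω < ∞)
    (hΩ_tile : ∀ x : G, ∃! γ : Γ, x * (γ : G)⁻¹ ∈ Ω)
    (g : H) (hg : ‖g‖ = 1)
    (hON : Orthonormal ℂ fun γ : Γ => π (γ : G) g) :
    IsCyclicVector (fun γ : Γ => π (γ : G)) g ↔ (μ Ω).toReal * d = 1 := by
  have hframe : ∀ u : H,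
      ∫⁻ x in Ω, ∑' γ : Γ, ENNReal.ofReal (‖⟪π γ g, (π x).symm u⟫‖ ^ 2) ∂μ
        = ENNReal.ofReal (d⁻¹ * ‖u‖ ^ 2) := fun u => by
    simpa [hg] using setLIntegral_tsum_ofReal_norm_inner_sq hrep hd hortho
      (isFundamentalDomain_op_of_existsUnique_mul_inv_mem hΩ_meas.nullMeasurableSet hΩ_tile)
      (hπ_meas g u)
  rw [IsCyclicVector, dense_iff_topologicalClosure_eq_top]
  constructor
  · intro htop
    rw [← Measure.restrict_apply_univ, hON.measure_univ_eq_of_lintegral_tsum_eq hframe htop hg,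
      ENNReal.toReal_ofReal (inv_pos.2 hd).le, inv_mul_cancel₀ hd.ne']
  · intro hvol
    refine hON.topologicalClosure_span_eq_top_of_lintegral_tsum_eq hframe (inv_pos.2 hd) ?_
    rw [Measure.restrict_apply_univ, ← eq_inv_of_mul_eq_one_left hvol,
      ENNReal.ofReal_toReal hΩ_fin.ne]

theorem stmt_16
    {G : Type*} [Group G] [TopologicalSpace G] [IsTopologicalGroup G]
    [LocallyCompactSpace G] [SecondCountableTopology G]
    [MeasurableSpace G] [BorelSpace G]
    (μ : Measure G) [μ.IsHaarMeasure] [μ.IsMulRightInvariant]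
    {H : Type*} [NormedAddCommGroup H] [InnerProductSpace ℂ H] [CompleteSpace H]
    [TopologicalSpace.SeparableSpace H]
    (σ : G → G → ℂ) (π : G → H ≃ₗᵢ[ℂ] H)
    (hrep : IsProjectiveRep σ π)
    (hσ_meas : Measurable fun p : G × G => σ p.1 p.2)
    (hπ_meas : ∀ f g : H, Measurable fun x : G => ⟪π x f, g⟫)
    (hirr : ∀ K : Submodule ℂ H, IsClosed (K : Set H) →
      (∀ x : G, ∀ f ∈ K, π x f ∈ K) → K = ⊥ ∨ K = ⊤)
    (d : ℝ) (hd : 0 < d)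
    (hortho : ∀ f₁ f₂ g₁ g₂ : H,
      ∫ x, ⟪π x f₁, g₁⟫ * (starRingEnd ℂ) ⟪π x f₂, g₂⟫ ∂μ
        = (d : ℂ)⁻¹ * (⟪f₁, f₂⟫ * (starRingEnd ℂ) ⟪g₁, g₂⟫))
    (Γ : Subgroup G) [Countable Γ] [DiscreteTopology Γ]
    (Ω : Set G) (hΩ_meas : MeasurableSet Ω) (hΩ_fin : μ Ω < ∞)
    (hΩ_tile : ∀ x : G, ∃! γ : Γ, x * (γ : G)⁻¹ ∈ Ω)
    (g : H) (hg : ‖g‖ = 1)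
    (hON : Orthonormal ℂ fun γ : Γ => π (γ : G) g) :
    IsCyclicVector (fun γ : Γ => π (γ : G)) g ↔ (μ Ω).toReal * d = 1 :=
  stmt_16_general μ σ π hrep hπ_meas d hd hortho Γ Ω hΩ_meas hΩ_fin hΩ_tile g hg hON
end
end

section
/- Let (π, H) be a square-integrable σ-representation of a countable discrete group Γ on a separable complex Hilbert space H. Let (g_k)_{k∈I} be a countable family of unit vectors in H satisfying the simultaneous orthogonality conditions: for k ≠ j, ⟨π(γ)g_k, π(γ')g_j⟩ = 0 for all γ, γ' ∈ Γ, and ⟨S g_k, T g_j⟩ = 0 for all S, T ∈ π(Γ)'. Let a = (a_k)_{k∈I} be absolutely summable with a_k ≠ 0 for all k, and set g := Σ_{k∈I} a_k g_k. Then the closed linear span [π(Γ)g] of {π(γ)g : γ ∈ Γ} equals the orthogonal direct sum ⊕_{k∈I} [π(Γ)g_k], and the closed linear span [π(Γ)'g] of {Tg : T ∈ π(Γ)'} equals the orthogonal direct sum ⊕_{k∈I} [π(Γ)'g_k]. -/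
open MeasureTheory
open scoped ENNReal ComplexInnerProductSpace

noncomputable section

/-!
Let `K` be a closed subspace containing `g₀ = ∑ a k • g k` and `Q` the projection onto `Kᗮ`.
If the vectors `Q (g k)` are mutually orthogonal, then `∑ a k • Q (g k) = Q g₀ = 0` forces
`Q (g k) = 0`, i.e. every `g k` lies in `K`. Then `K` contains each `[𝒜 g k]` by invariance,
and `T g₀ = ∑ a k • T (g k)` gives the reverse inclusion.

For `K = [π(Γ) g₀]`, `K` is invariant under `π(Γ)` and its adjoints (the adjoint of `π γ` is a
multiple of `π γ⁻¹`), so `Q ∈ π(Γ)'` and the orthogonality hypothesis on `π(Γ)'` applies.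
For `K = [π(Γ)' g₀]`, `Q` lies in `π(Γ)''`, hence commutes with the projection onto
`[π(Γ) g k]`, which lies in `π(Γ)'`; so `Q (g k) ∈ [π(Γ) g k]`, and these subspaces are
mutually orthogonal.
-/

open scoped InnerProductSpace

section HilbertSpace

variable {𝕜 E ι : Type*} [RCLike 𝕜] [NormedAddCommGroup E] [InnerProductSpace 𝕜 E]

theorem eq_zero_of_hasSum_zero_of_pairwise_inner_eq_zero {w : ι → E}
    (horth : Pairwise fun i j => ⟪w i, w j⟫_𝕜 = 0) (hw : HasSum w 0) (i : ι) : w i = 0 := by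
  have h₀ : HasSum (fun j => ⟪w i, w j⟫_𝕜) 0 := by
    simpa using (innerSL 𝕜 (w i)).hasSum hw
  have hi : HasSum (fun j => ⟪w i, w j⟫_𝕜) ⟪w i, w i⟫_𝕜 :=
    hasSum_single i fun j hj => horth hj.symm
  exact inner_self_eq_zero.mp (hi.unique h₀)

namespace Submodule

theorem IsOrtho.topologicalClosure {U V : Submodule 𝕜 E} (h : U ⟂ V) :
    U.topologicalClosure ⟂ V.topologicalClosure := by
  rw [isOrtho_iff_le, orthogonal_closure]
  exact topologicalClosure_minimal _ (isOrtho_iff_le.mp h) (isClosed_orthogonal V)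

variable {K : Submodule 𝕜 E} [K.HasOrthogonalProjection]

theorem mem_of_hasSum_mem_of_pairwise_orthogonal {g : ι → E} {a : ι → 𝕜} {g₀ : E}
    (hsum : HasSum (fun i => a i • g i) g₀) (hg₀ : g₀ ∈ K) (ha : ∀ i, a i ≠ 0)
    (horth : Pairwise fun i j => ⟪Kᗮ.starProjection (g i), Kᗮ.starProjection (g j)⟫_𝕜 = 0)
    (i : ι) : g i ∈ K := by
  have hzero : HasSum (fun j => a j • Kᗮ.starProjection (g j)) 0 := by
    simpa [starProjection_orthogonal_apply_eq_zero hg₀] using Kᗮ.starProjection.hasSum hsum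
  have hi := eq_zero_of_hasSum_zero_of_pairwise_inner_eq_zero (𝕜 := 𝕜) (fun j k hjk => by
    dsimp only
    rw [inner_smul_left, inner_smul_right, horth hjk, mul_zero, mul_zero]) hzero i
  rw [smul_eq_zero, starProjection_apply_eq_zero_iff, orthogonal_orthogonal] at hi
  exact hi.resolve_left (ha i)

theorem starProjection_mul_comm [CompleteSpace E] {T : E →L[𝕜] E}
    (hT : Set.MapsTo T K K) (hT' : Set.MapsTo ⇑(star T) K K) :
    K.starProjection * T = T * K.starProjection := by
  ext f
  rw [mul_apply_eq_comp, mul_apply_eq_comp]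
  refine eq_starProjection_of_mem_of_inner_eq_zero (hT (K.starProjection_apply_mem f))
    fun w hw => ?_
  rw [← map_sub, ← ContinuousLinearMap.adjoint_inner_right, ← ContinuousLinearMap.star_eq_adjoint]
  exact inner_left_of_mem_orthogonal (hT' hw) (sub_starProjection_mem_orthogonal f)

theorem starProjection_orthogonal_mem_centralizer {𝒜 : Set (E →L[𝕜] E)}
    (h : K.starProjection ∈ 𝒜.centralizer) : Kᗮ.starProjection ∈ 𝒜.centralizer := by
  have hP : Kᗮ.starProjection = 1 - K.starProjection := by
    ext x
    simp
  rw [hP]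
  exact (Subalgebra.centralizer 𝕜 𝒜).sub_mem (Subalgebra.centralizer 𝕜 𝒜).one_mem h

end Submodule

end HilbertSpace

theorem Set.star_mem_centralizer_of_forall_star_mem_span {R A : Type*} [CommSemiring R]
    [StarRing R] [Semiring A] [StarRing A] [Algebra R A] [StarModule R A] {s : Set A} {a : A}
    (hs : ∀ b ∈ s, star b ∈ Submodule.span R s) (ha : a ∈ s.centralizer) :
    star a ∈ s.centralizer := by
  intro b hb
  have hcomm : Commute a (star b) :=
    Algebra.commute_of_mem_adjoin_of_forall_mem_commute (Algebra.span_le_adjoin R s (hs b hb))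
      fun c hc => (ha c hc).symm
  simpa using hcomm.star_star.symm.eq

section CyclicSubspace

variable {𝕜 E : Type*} [RCLike 𝕜] [NormedAddCommGroup E] [NormedSpace 𝕜 E]
  {𝒜 : Set (E →L[𝕜] E)}

def cyclicSubspace (𝒜 : Set (E →L[𝕜] E)) (v : E) : Submodule 𝕜 E :=
  (Submodule.span 𝕜 ((fun T => T v) '' 𝒜)).topologicalClosure

theorem isClosed_cyclicSubspace (𝒜 : Set (E →L[𝕜] E)) (v : E) :
    IsClosed (cyclicSubspace 𝒜 v : Set E) :=
  Submodule.isClosed_topologicalClosure _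

theorem apply_mem_cyclicSubspace {T : E →L[𝕜] E} (hT : T ∈ 𝒜) (v : E) :
    T v ∈ cyclicSubspace 𝒜 v :=
  Submodule.le_topologicalClosure _ (Submodule.subset_span ⟨T, hT, rfl⟩)

theorem self_mem_cyclicSubspace (h𝒜 : 1 ∈ 𝒜) (v : E) : v ∈ cyclicSubspace 𝒜 v :=
  apply_mem_cyclicSubspace h𝒜 v

theorem mapsTo_of_mem_span {K : Submodule 𝕜 E} (h : ∀ S ∈ 𝒜, Set.MapsTo S K K)
    {S : E →L[𝕜] E} (hS : S ∈ Submodule.span 𝕜 𝒜) : Set.MapsTo S K K := by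
  induction hS using Submodule.span_induction with
  | mem S hS => exact h S hS
  | zero => exact fun _ _ => K.zero_mem
  | add S T _ _ hS hT => exact fun x hx => K.add_mem (hS hx) (hT hx)
  | smul c S _ hS => exact fun x hx => K.smul_mem c (hS hx)

theorem mapsTo_cyclicSubspace (hmul : ∀ S ∈ 𝒜, ∀ T ∈ 𝒜, S * T ∈ Submodule.span 𝕜 𝒜)
    {S : E →L[𝕜] E} (hS : S ∈ 𝒜) (v : E) :
    Set.MapsTo S (cyclicSubspace 𝒜 v) (cyclicSubspace 𝒜 v) := by
  have hspan : Submodule.span 𝕜 ((fun T => T v) '' 𝒜)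
      ≤ (Submodule.span 𝕜 ((fun T => T v) '' 𝒜)).comap (S : E →ₗ[𝕜] E) := by
    refine Submodule.span_le.mpr ?_
    rintro _ ⟨T, hT, rfl⟩
    exact Submodule.apply_mem_span_image_of_mem_span (ContinuousLinearMap.apply 𝕜 E v).toLinearMap
      (hmul S hS T hT)
  rw [cyclicSubspace, Submodule.topologicalClosure_coe]
  exact Set.MapsTo.closure (fun x hx => hspan hx) S.continuous

theorem cyclicSubspace_le_of_mem (hmul : ∀ S ∈ 𝒜, ∀ T ∈ 𝒜, S * T ∈ Submodule.span 𝕜 𝒜)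
    {v w : E} (hw : w ∈ cyclicSubspace 𝒜 v) : cyclicSubspace 𝒜 w ≤ cyclicSubspace 𝒜 v := by
  refine Submodule.topologicalClosure_minimal _ ?_ (isClosed_cyclicSubspace 𝒜 v)
  rw [Submodule.span_le]
  rintro _ ⟨T, hT, rfl⟩
  exact mapsTo_cyclicSubspace hmul hT v hw

theorem cyclicSubspace_eq_iSup_of_hasSum {ι : Type*}
    (hmul : ∀ S ∈ 𝒜, ∀ T ∈ 𝒜, S * T ∈ Submodule.span 𝕜 𝒜) {g : ι → E} {a : ι → 𝕜} {g₀ : E}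
    (hsum : HasSum (fun i => a i • g i) g₀) (hg : ∀ i, g i ∈ cyclicSubspace 𝒜 g₀) :
    cyclicSubspace 𝒜 g₀ = (⨆ i, cyclicSubspace 𝒜 (g i)).topologicalClosure := by
  apply le_antisymm
  · refine Submodule.topologicalClosure_minimal _ ?_ (Submodule.isClosed_topologicalClosure _)
    rw [Submodule.span_le]
    rintro _ ⟨T, hT, rfl⟩
    refine (Submodule.isClosed_topologicalClosure _).mem_of_tendsto (T.hasSum hsum)
      (Filter.Eventually.of_forall fun s => Submodule.sum_mem _ fun i _ => ?_)
    rw [map_smul]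
    refine Submodule.smul_mem _ _ (Submodule.le_topologicalClosure _ ?_)
    exact Submodule.mem_iSup_of_mem i (apply_mem_cyclicSubspace hT (g i))
  · refine Submodule.topologicalClosure_minimal _ ?_ (isClosed_cyclicSubspace 𝒜 g₀)
    exact iSup_le fun i => cyclicSubspace_le_of_mem hmul (hg i)

end CyclicSubspace

section CyclicProjection

variable {𝕜 E : Type*} [RCLike 𝕜] [NormedAddCommGroup E] [InnerProductSpace 𝕜 E]
  {𝒜 : Set (E →L[𝕜] E)}

theorem isOrtho_cyclicSubspace {v w : E} (h : ∀ S ∈ 𝒜, ∀ T ∈ 𝒜, ⟪S v, T w⟫_𝕜 = 0) :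
    cyclicSubspace 𝒜 v ⟂ cyclicSubspace 𝒜 w := by
  refine Submodule.IsOrtho.topologicalClosure (Submodule.isOrtho_span.mpr ?_)
  rintro _ ⟨S, hS, rfl⟩ _ ⟨T, hT, rfl⟩
  exact h S hS T hT

variable [CompleteSpace E]

instance (v : E) : CompleteSpace (cyclicSubspace 𝒜 v) :=
  (isClosed_cyclicSubspace 𝒜 v).completeSpace_coe

theorem starProjection_cyclicSubspace_mem_centralizer
    (hmul : ∀ S ∈ 𝒜, ∀ T ∈ 𝒜, S * T ∈ Submodule.span 𝕜 𝒜)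
    (hstar : ∀ T ∈ 𝒜, star T ∈ Submodule.span 𝕜 𝒜) (v : E) :
    (cyclicSubspace 𝒜 v).starProjection ∈ 𝒜.centralizer := fun T hT =>
  ((cyclicSubspace 𝒜 v).starProjection_mul_comm (mapsTo_cyclicSubspace hmul hT v)
    (mapsTo_of_mem_span (fun _ hS => mapsTo_cyclicSubspace hmul hS v) (hstar T hT))).symm

end CyclicProjection

section ProjectiveRep

variable {Γ : Type*} {H : Type*} [NormedAddCommGroup H] [InnerProductSpace ℂ H]
  {σ : Γ → Γ → ℂ} {π : Γ → H ≃ₗᵢ[ℂ] H}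

def repOperators (π : Γ → H ≃ₗᵢ[ℂ] H) : Set (H →L[ℂ] H) :=
  Set.range fun γ => (π γ : H →L[ℂ] H)

theorem cyclicSubspace_repOperators (π : Γ → H ≃ₗᵢ[ℂ] H) (v : H) :
    cyclicSubspace (repOperators π) v
      = (Submodule.span ℂ (Set.range fun γ => π γ v)).topologicalClosure := by
  rw [cyclicSubspace, repOperators, ← Set.range_comp]
  rfl

theorem repCommutant_eq_centralizer (π : Γ → H ≃ₗᵢ[ℂ] H) :
    RepCommutant π = (repOperators π).centralizer := by
  ext T
  simp only [RepCommutant, repOperators, Set.mem_ofPred_eq, Set.mem_centralizer_iff,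
    Set.forall_mem_range, ContinuousLinearMap.ext_iff, mul_apply_eq_comp]
  exact forall_congr' fun γ => forall_congr' fun f => eq_comm

namespace IsProjectiveRep

variable [Group Γ]

theorem one_mem_repOperators (hrep : IsProjectiveRep σ π) : 1 ∈ repOperators π :=
  ⟨1, by simp [hrep.2.2.2.1, ContinuousLinearMap.one_def]⟩

theorem mul_mem_span_repOperators (hrep : IsProjectiveRep σ π) :
    ∀ S ∈ repOperators π, ∀ T ∈ repOperators π, S * T ∈ Submodule.span ℂ (repOperators π) := by
  rintro _ ⟨γ, rfl⟩ _ ⟨γ', rfl⟩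
  have h : (π γ : H →L[ℂ] H) * π γ' = σ γ γ' • (π (γ * γ') : H →L[ℂ] H) := by
    ext f; exact hrep.2.2.2.2 γ γ' f
  rw [h]
  exact Submodule.smul_mem _ _ (Submodule.subset_span ⟨γ * γ', rfl⟩)

variable [CompleteSpace H]

theorem star_mem_span_repOperators (hrep : IsProjectiveRep σ π) :
    ∀ T ∈ repOperators π, star T ∈ Submodule.span ℂ (repOperators π) := by
  rintro _ ⟨γ, rfl⟩
  have hσ : σ γ⁻¹ γ ≠ 0 := fun h => by simpa [h] using hrep.1 γ⁻¹ γ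
  have h : star (π γ : H →L[ℂ] H) = (σ γ⁻¹ γ)⁻¹ • (π γ⁻¹ : H →L[ℂ] H) := by
    ext f
    have hcocycle := hrep.2.2.2.2 γ⁻¹ γ ((π γ).symm f)
    rw [LinearIsometryEquiv.apply_symm_apply, inv_mul_cancel, hrep.2.2.2.1] at hcocycle
    simp [hcocycle, smul_smul, inv_mul_cancel₀ hσ]
  rw [h]
  exact Submodule.smul_mem _ _ (Submodule.subset_span ⟨γ⁻¹, rfl⟩)

variable {I : Type*} {g : I → H} {a : I → ℂ} {g₀ : H}

theorem closure_span_orbit_eq_iSup (hrep : IsProjectiveRep σ π)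
    (horth : ∀ k j : I, k ≠ j → ∀ S ∈ RepCommutant π, ∀ T ∈ RepCommutant π,
      ⟪S (g k), T (g j)⟫ = 0)
    (ha : ∀ k, a k ≠ 0) (hg₀ : HasSum (fun k => a k • g k) g₀) :
    (Submodule.span ℂ (Set.range fun γ => π γ g₀)).topologicalClosure
      = (⨆ k, (Submodule.span ℂ
          (Set.range fun γ => π γ (g k))).topologicalClosure).topologicalClosure := by
  simp only [← cyclicSubspace_repOperators]
  have hQ := Submodule.starProjection_orthogonal_mem_centralizer
    (starProjection_cyclicSubspace_mem_centralizer
      hrep.mul_mem_span_repOperators hrep.star_mem_span_repOperators g₀)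
  rw [← repCommutant_eq_centralizer] at hQ
  exact cyclicSubspace_eq_iSup_of_hasSum hrep.mul_mem_span_repOperators hg₀
    (Submodule.mem_of_hasSum_mem_of_pairwise_orthogonal hg₀
      (self_mem_cyclicSubspace hrep.one_mem_repOperators g₀) ha
      fun k j hkj => horth k j hkj _ hQ _ hQ)

theorem closure_span_commutant_apply_eq_iSup (hrep : IsProjectiveRep σ π)
    (horth : ∀ k j : I, k ≠ j → ∀ γ γ' : Γ, ⟪π γ (g k), π γ' (g j)⟫ = 0)
    (ha : ∀ k, a k ≠ 0) (hg₀ : HasSum (fun k => a k • g k) g₀) :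
    (Submodule.span ℂ {v | ∃ T ∈ RepCommutant π, T g₀ = v}).topologicalClosure
      = (⨆ k, (Submodule.span ℂ
          {v | ∃ T ∈ RepCommutant π, T (g k) = v}).topologicalClosure).topologicalClosure := by
  change cyclicSubspace (RepCommutant π) g₀
    = (⨆ k, cyclicSubspace (RepCommutant π) (g k)).topologicalClosure
  rw [repCommutant_eq_centralizer]
  set 𝒞 := (repOperators π).centralizer
  have hmul : ∀ S ∈ 𝒞, ∀ T ∈ 𝒞, S * T ∈ Submodule.span ℂ 𝒞 := fun S hS T hT =>
    Submodule.subset_span (Set.mul_mem_centralizer hS hT)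
  have hstar : ∀ T ∈ 𝒞, star T ∈ Submodule.span ℂ 𝒞 := fun T hT => Submodule.subset_span
    (Set.star_mem_centralizer_of_forall_star_mem_span hrep.star_mem_span_repOperators hT)
  set Q := (cyclicSubspace 𝒞 g₀)ᗮ.starProjection
  have hQ : ∀ k, Q (g k) ∈ cyclicSubspace (repOperators π) (g k) := by
    intro k
    set M := cyclicSubspace (repOperators π) (g k)
    have hP : M.starProjection ∈ 𝒞 := starProjection_cyclicSubspace_mem_centralizer
      hrep.mul_mem_span_repOperators hrep.star_mem_span_repOperators (g k)
    have hPg : M.starProjection (g k) = g k :=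
      M.starProjection_eq_self_iff.mpr (self_mem_cyclicSubspace hrep.one_mem_repOperators (g k))
    have hcomm : M.starProjection * Q = Q * M.starProjection :=
      Submodule.starProjection_orthogonal_mem_centralizer
        (starProjection_cyclicSubspace_mem_centralizer hmul hstar g₀) _ hP
    rw [← hPg, ← mul_apply_eq_comp, ← hcomm, mul_apply_eq_comp]
    exact M.starProjection_apply_mem _
  have hMorth : Pairwise fun k j =>
      cyclicSubspace (repOperators π) (g k) ⟂ cyclicSubspace (repOperators π) (g j) :=
    fun k j hkj => isOrtho_cyclicSubspace (by simpa [repOperators] using horth k j hkj)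
  exact cyclicSubspace_eq_iSup_of_hasSum hmul hg₀
    (Submodule.mem_of_hasSum_mem_of_pairwise_orthogonal hg₀
      (self_mem_cyclicSubspace Set.one_mem_centralizer g₀) ha
      fun k j hkj => (hMorth hkj).inner_eq (hQ k) (hQ j))

end IsProjectiveRep

end ProjectiveRep

theorem stmt_18_general
    {Γ : Type*} [Group Γ]
    {H : Type*} [NormedAddCommGroup H] [InnerProductSpace ℂ H] [CompleteSpace H]
    (σ : Γ → Γ → ℂ) (π : Γ → H ≃ₗᵢ[ℂ] H)
    (hrep : IsProjectiveRep σ π)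
    {I : Type*} (g : I → H)
    (horthπ : ∀ k j : I, k ≠ j → ∀ γ γ' : Γ, ⟪π γ (g k), π γ' (g j)⟫ = 0)
    (horthcom : ∀ k j : I, k ≠ j → ∀ S ∈ RepCommutant π, ∀ T ∈ RepCommutant π,
      ⟪S (g k), T (g j)⟫ = 0)
    (a : I → ℂ) (ha_ne : ∀ k : I, a k ≠ 0)
    (g₀ : H) (hg₀ : HasSum (fun k : I => a k • g k) g₀) :
    (Submodule.span ℂ (Set.range fun γ : Γ => π γ g₀)).topologicalClosure
      = (⨆ k : I,
          (Submodule.span ℂ (Set.range fun γ : Γ => π γ (g k))).topologicalClosure).topologicalClosure ∧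
    (Submodule.span ℂ {v : H | ∃ T ∈ RepCommutant π, T g₀ = v}).topologicalClosure
      = (⨆ k : I,
          (Submodule.span ℂ {v : H | ∃ T ∈ RepCommutant π, T (g k) = v}).topologicalClosure).topologicalClosure :=
  ⟨hrep.closure_span_orbit_eq_iSup horthcom ha_ne hg₀,
    hrep.closure_span_commutant_apply_eq_iSup horthπ ha_ne hg₀⟩

theorem stmt_18
    {Γ : Type*} [Group Γ] [Countable Γ]
    {H : Type*} [NormedAddCommGroup H] [InnerProductSpace ℂ H] [CompleteSpace H]
    [TopologicalSpace.SeparableSpace H]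
    (σ : Γ → Γ → ℂ) (π : Γ → H ≃ₗᵢ[ℂ] H)
    (hrep : IsProjectiveRep σ π)
    (hsq : IsSquareIntegrableRep π)
    {I : Type*} [Countable I] (g : I → H) (hnorm : ∀ k : I, ‖g k‖ = 1)
    (horthπ : ∀ k j : I, k ≠ j → ∀ γ γ' : Γ, ⟪π γ (g k), π γ' (g j)⟫ = 0)
    (horthcom : ∀ k j : I, k ≠ j → ∀ S ∈ RepCommutant π, ∀ T ∈ RepCommutant π,
      ⟪S (g k), T (g j)⟫ = 0)
    (a : I → ℂ) (ha_sum : Summable fun k : I => ‖a k‖) (ha_ne : ∀ k : I, a k ≠ 0)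
    (g₀ : H) (hg₀ : HasSum (fun k : I => a k • g k) g₀) :
    (Submodule.span ℂ (Set.range fun γ : Γ => π γ g₀)).topologicalClosure
      = (⨆ k : I,
          (Submodule.span ℂ (Set.range fun γ : Γ => π γ (g k))).topologicalClosure).topologicalClosure ∧
    (Submodule.span ℂ {v : H | ∃ T ∈ RepCommutant π, T g₀ = v}).topologicalClosure
      = (⨆ k : I,
          (Submodule.span ℂ {v : H | ∃ T ∈ RepCommutant π, T (g k) = v}).topologicalClosure).topologicalClosure :=
  stmt_18_general σ π hrep g horthπ horthcom a ha_ne g₀ hg₀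
end
end
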